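/- Let S be a finite involutory semigroup. Then the following are equivalent: (1) there exists an idempotent e ∈ S such that it is NOT the case that e ≤_J e*·e; (2) TSL divides S, i.e., there exist a subsemigroup T of S closed under the involution and a surjective map φ : T → TSL with φ(x·y) = φ(x)·φ(y) and φ(x*) = φ(x)* for all x, y ∈ T. -/

import Mathlib

/-- `a ≤_J b`: `a` lies in the two-sided ideal generated by `b`. -/
def leJ {S : Type*} [Semigroup S] (a b : S) : Prop :=
  a = b ∨ (∃ u, a = b * u) ∨ (∃ u, a = u * b) ∨ (∃ u v, a = u * b * v)

/-- The 3-element twisted semilattice `{e, f, 0}`. -/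
inductive TSL where
  | e : TSL
  | f : TSL
  | z : TSL
deriving DecidableEq

instance : Fintype TSL :=
  ⟨⟨↑[TSL.e, TSL.f, TSL.z], by decide⟩, fun x => by cases x <;> decide⟩

instance : Mul TSL :=
  ⟨fun a b => match a, b with
    | .e, .e => .e
    | .f, .f => .f
    | _, _ => .z⟩

instance : Semigroup TSL where
  mul_assoc := by decide

instance : Star TSL :=
  ⟨fun a => match a with
    | .e => .f
    | .f => .e
    | .z => .z⟩

instance : InvolutiveStar TSL := ⟨fun a => by cases a <;> rfl⟩

instance : StarMul TSL := ⟨fun a b => by cases a <;> cases b <;> rfl⟩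

section AuxTSL

variable {S : Type*} [Semigroup S]

/-- `pwr x n = x^(n+1)`. -/
private def pwr (x : S) : ℕ → S
  | 0 => x
  | n+1 => pwr x n * x

private lemma pwr_succ' (x : S) (n : ℕ) : pwr x (n+1) = x * pwr x n := by
  induction n with
  | zero => rfl
  | succ k ih =>
      show pwr x (k+1) * x = x * pwr x (k+1)
      conv_lhs => rw [ih]
      rw [mul_assoc]
      rfl

private lemma pwr_add (x : S) (a b : ℕ) : pwr x a * pwr x b = pwr x (a + b + 1) := by
  induction b with
  | zero => rfl
  | succ k ih =>
      show pwr x a * (pwr x k * x) = pwr x (a + k + 1) * x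
      rw [← mul_assoc, ih]

private lemma pwr_absorb {m e : S} (hme : m * e = m) : ∀ k, pwr m k * e = pwr m k := by
  intro k
  induction k with
  | zero => exact hme
  | succ j ih =>
      show (pwr m j * m) * e = pwr m j * m
      rw [mul_assoc, hme]

private lemma pwr_mem {T : Set S} (hTmul : ∀ x ∈ T, ∀ y ∈ T, x * y ∈ T) {x : S}
    (hx : x ∈ T) : ∀ n, pwr x n ∈ T := by
  intro n
  induction n with
  | zero => exact hx
  | succ k ih => exact hTmul _ ih _ hx

private lemma pwr_phi {T : Set S} {φ : S → TSL}
    (hTmul : ∀ x ∈ T, ∀ y ∈ T, x * y ∈ T)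
    (hhom : ∀ x ∈ T, ∀ y ∈ T, φ (x * y) = φ x * φ y) {x : S} (hx : x ∈ T)
    {a : TSL} (hxa : φ x = a) (haa : a * a = a) : ∀ n, φ (pwr x n) = a := by
  intro n
  induction n with
  | zero => exact hxa
  | succ k ih =>
      show φ (pwr x k * x) = a
      rw [hhom _ (pwr_mem hTmul hx k) _ hx, ih, hxa, haa]

private lemma exists_idem_aux (x : S) {i j : ℕ} (hij : i < j) (heq : pwr x i = pwr x j) :
    ∃ n, pwr x n * pwr x n = pwr x n := by
  set p := j - i with hpdef
  have hp1 : 1 ≤ p := by omega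
  have shift : ∀ d, pwr x (i + d) = pwr x (i + d + p) := by
    intro d
    induction d with
    | zero =>
        have h1 : i + 0 + p = j := by omega
        rw [h1]
        exact heq
    | succ k ih =>
        have e2 : i + (k+1) + p = (i + k + p) + 1 := by omega
        rw [e2]
        show pwr x (i + k) * x = pwr x (i + k + p) * x
        rw [ih]
  have multi : ∀ t d, pwr x (i + d) = pwr x (i + d + t * p) := by
    intro t
    induction t with
    | zero => intro d; norm_num
    | succ k ih =>
        intro d
        have e3 : i + d + (k+1) * p = (i + (d + k * p)) + p := by
          rw [Nat.succ_mul]; ring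
        rw [e3]
        calc pwr x (i + d) = pwr x (i + d + k * p) := ih d
          _ = pwr x (i + (d + k * p)) := by rw [Nat.add_assoc]
          _ = pwr x (i + (d + k * p) + p) := shift (d + k * p)
  obtain ⟨q, hq⟩ : ∃ q, q = (i+1) * p := ⟨_, rfl⟩
  have hq1 : i + 1 ≤ q := by
    rw [hq]
    calc i + 1 = (i+1) * 1 := (mul_one _).symm
      _ ≤ (i+1) * p := Nat.mul_le_mul_left _ hp1
  refine ⟨q - 1, ?_⟩
  have harith : (q-1) + (q-1) + 1 = i + ((q-1) - i) + q := by omega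
  calc pwr x (q-1) * pwr x (q-1) = pwr x ((q-1) + (q-1) + 1) := pwr_add x _ _
    _ = pwr x (i + ((q-1) - i) + (i+1) * p) := by rw [harith, hq]
    _ = pwr x (i + ((q-1) - i)) := (multi (i+1) ((q-1) - i)).symm
    _ = pwr x (q-1) := by rw [show i + ((q-1) - i) = q - 1 by omega]

private lemma pwr_exists_idem [Finite S] (x : S) : ∃ n, pwr x n * pwr x n = pwr x n := by
  obtain ⟨a, b, hab, heq⟩ := Finite.exists_ne_map_eq_of_infinite (pwr x)
  rcases Nat.lt_or_ge a b with h | h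
  · exact exists_idem_aux x h heq
  · exact exists_idem_aux x (lt_of_le_of_ne h fun q => hab q.symm) heq.symm

private lemma pump_left [Finite S] {e A B : S} (h : e = A * e * B) :
    ∃ n, pwr A n * e = e := by
  have hp : ∀ k, e = pwr A k * e * pwr B k := by
    intro k
    induction k with
    | zero => exact h
    | succ j ih =>
        calc e = pwr A j * e * pwr B j := ih
          _ = pwr A j * (A * e * B) * pwr B j := by
              conv_lhs => rw [h]
          _ = (pwr A j * A) * e * (B * pwr B j) := by simp only [mul_assoc]
          _ = pwr A (j+1) * e * pwr B (j+1) := by rw [← pwr_succ' B j]; rfl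
  obtain ⟨n, hn⟩ := pwr_exists_idem A
  refine ⟨n, ?_⟩
  conv_lhs => rw [hp n]
  rw [show pwr A n * (pwr A n * e * pwr B n) = (pwr A n * pwr A n) * e * pwr B n from
    by simp only [mul_assoc], hn, ← hp n]

private lemma leJ_mul_left {a b : S} (h : leJ a b) (x : S) : leJ (x * a) b := by
  rcases h with rfl | ⟨u, rfl⟩ | ⟨u, rfl⟩ | ⟨u, v, rfl⟩
  · exact Or.inr (Or.inr (Or.inl ⟨x, rfl⟩))
  · exact Or.inr (Or.inr (Or.inr ⟨x, u, by rw [mul_assoc]⟩))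
  · exact Or.inr (Or.inr (Or.inl ⟨x * u, (mul_assoc _ _ _).symm⟩))
  · exact Or.inr (Or.inr (Or.inr ⟨x * u, v, by simp only [mul_assoc]⟩))

private lemma leJ_mul_right {a b : S} (h : leJ a b) (x : S) : leJ (a * x) b := by
  rcases h with rfl | ⟨u, rfl⟩ | ⟨u, rfl⟩ | ⟨u, v, rfl⟩
  · exact Or.inr (Or.inl ⟨x, rfl⟩)
  · exact Or.inr (Or.inl ⟨u * x, mul_assoc _ _ _⟩)
  · exact Or.inr (Or.inr (Or.inr ⟨u, x, rfl⟩))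
  · exact Or.inr (Or.inr (Or.inr ⟨u, v * x, by simp only [mul_assoc]⟩))

private lemma leJ_star' [StarMul S] {a b : S} (h : leJ a b) : leJ (star a) (star b) := by
  rcases h with rfl | ⟨u, rfl⟩ | ⟨u, rfl⟩ | ⟨u, v, rfl⟩
  · exact Or.inl rfl
  · exact Or.inr (Or.inr (Or.inl ⟨star u, by rw [star_mul]⟩))
  · exact Or.inr (Or.inl ⟨star u, by rw [star_mul]⟩)
  · exact Or.inr (Or.inr (Or.inr ⟨star v, star u, by simp only [star_mul, mul_assoc]⟩))

private lemma pwr_shape [StarMul S] (e u : S) :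
    ∀ n, ∃ c, pwr (e * u * star e) n = e * c * star e := by
  intro n
  induction n with
  | zero => exact ⟨u, rfl⟩
  | succ k ih =>
      obtain ⟨c, hc⟩ := ih
      refine ⟨c * star e * e * u, ?_⟩
      show pwr (e * u * star e) k * (e * u * star e) = _
      rw [hc]
      simp only [mul_assoc]

/-- If `e` is idempotent and `e ≤_J e* e` in a finite semigroup, then `e ≤_L e* e`. -/
private lemma Lred [Finite S] [StarMul S] {e : S} (he : e * e = e)
    (hle : leJ e (star e * e)) : ∃ t, e = t * (star e * e) := by
  have hstar2 : star e * star e = star e := by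
    have := congrArg star he; rwa [star_mul] at this
  rcases hle with h | ⟨u, h⟩ | ⟨u, h⟩ | ⟨u, v, h⟩
  · exact ⟨e, by rw [← h, he]⟩
  · have hh : star e * e = e := by
      have h1 : star e * e = star e * (star e * e * u) := congrArg (fun z => star e * z) h
      calc star e * e = star e * (star e * e * u) := h1
        _ = star e * star e * (e * u) := by simp only [mul_assoc]
        _ = star e * (e * u) := by rw [hstar2]
        _ = star e * e * u := by rw [mul_assoc]
        _ = e := h.symm
    exact ⟨e, by rw [hh, he]⟩
  · exact ⟨u, h⟩
  · have h2 : e * (u * (star e * e) * v) * e = e := by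
      conv_lhs => rw [← h]
      rw [he, he]
    have h3 : e = (e * u * star e) * e * (v * e) := by
      calc e = e * (u * (star e * e) * v) * e := h2.symm
        _ = (e * u * star e) * e * (v * e) := by simp only [mul_assoc]
    obtain ⟨n, hGe⟩ := pump_left h3
    obtain ⟨c, hc⟩ := pwr_shape e u n
    refine ⟨e * c, ?_⟩
    calc e = pwr (e * u * star e) n * e := hGe.symm
      _ = (e * c * star e) * e := by rw [hc]
      _ = (e * c) * (star e * e) := by simp only [mul_assoc]

/-- Forward direction: a witnessing idempotent yields a TSL division. -/
private lemma forward_div [StarMul S] {e : S}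
    (he : e * e = e) (hne : ¬ leJ e (star e * e)) :
    ∃ T : Set S,
      (∀ x ∈ T, ∀ y ∈ T, x * y ∈ T) ∧
      (∀ x ∈ T, star x ∈ T) ∧
      ∃ φ : S → TSL,
        (∀ t : TSL, ∃ x ∈ T, φ x = t) ∧
        (∀ x ∈ T, ∀ y ∈ T, φ (x * y) = φ x * φ y) ∧
        (∀ x ∈ T, φ (star x) = star (φ x)) := by
  classical
  have hstar2 : star e * star e = star e := by
    have := congrArg star he; rwa [star_mul] at this
  have hstarh : star (star e * e) = star e * e := by rw [star_mul, star_star]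
  have hne' : ¬ leJ (star e) (star e * e) := by
    intro hL
    have h1 := leJ_star' hL
    rw [star_star, hstarh] at h1
    exact hne h1
  have hEF : e ≠ star e := fun q => hne (Or.inl (by rw [← q, he]))
  have hgstar : star (e * star e) = e * star e := by rw [star_mul, star_star]
  have hgne : e * star e ≠ e := by
    intro q
    apply hEF
    calc e = e * star e := q.symm
      _ = star (e * star e) := hgstar.symm
      _ = star e := by rw [q]
  have hgnf : e * star e ≠ star e := by
    intro q
    have h1 : star (e * star e) = e := by rw [q, star_star]
    rw [hgstar] at h1
    exact hgne h1
  have hI1 : leJ (star e * e) (star e * e) := Or.inl rfl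
  obtain ⟨φ, hφd⟩ : ∃ φ : S → TSL,
      ∀ z, φ z = if z = e then TSL.e else if z = star e then TSL.f else TSL.z :=
    ⟨_, fun _ => rfl⟩
  have hφe : φ e = TSL.e := by rw [hφd, if_pos rfl]
  have hφf : φ (star e) = TSL.f := by
    rw [hφd, if_neg (fun q => hEF q.symm), if_pos rfl]
  have hφz : ∀ z, z ≠ e → z ≠ star e → φ z = TSL.z := fun z h1 h2 => by
    rw [hφd, if_neg h1, if_neg h2]
  have hIz : ∀ z, leJ z (star e * e) → φ z = TSL.z := fun z hz =>
    hφz z (fun q => hne (q ▸ hz)) (fun q => hne' (q ▸ hz))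
  have hgz : φ (e * star e) = TSL.z := hφz _ hgne hgnf
  refine ⟨insert e (insert (star e) (insert (e * star e) {s | leJ s (star e * e)})),
    ?_, ?_, φ, ?_, ?_, ?_⟩
  · -- multiplicative closure
    intro x hx y hy
    simp only [Set.mem_insert_iff, Set.mem_setOf_eq] at hx hy ⊢
    rcases hx with hx | hx | hx | hx <;> rcases hy with hy | hy | hy | hy
    · rw [hx, hy]; exact Or.inl he
    · rw [hx, hy]; exact Or.inr (Or.inr (Or.inl rfl))
    · rw [hx, hy]
      exact Or.inr (Or.inr (Or.inl (by rw [← mul_assoc, he])))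
    · rw [hx]; exact Or.inr (Or.inr (Or.inr (leJ_mul_left hy e)))
    · rw [hx, hy]; exact Or.inr (Or.inr (Or.inr hI1))
    · rw [hx, hy]; exact Or.inr (Or.inl hstar2)
    · rw [hx, hy]
      refine Or.inr (Or.inr (Or.inr ?_))
      rw [← mul_assoc]
      exact leJ_mul_right hI1 (star e)
    · rw [hx]; exact Or.inr (Or.inr (Or.inr (leJ_mul_left hy (star e))))
    · rw [hx, hy]
      refine Or.inr (Or.inr (Or.inr ?_))
      rw [mul_assoc]
      exact leJ_mul_left hI1 e
    · rw [hx, hy]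
      exact Or.inr (Or.inr (Or.inl (by rw [mul_assoc, hstar2])))
    · rw [hx, hy]
      refine Or.inr (Or.inr (Or.inr ?_))
      rw [show (e * star e) * (e * star e) = e * ((star e * e) * star e) from
        by simp only [mul_assoc]]
      exact leJ_mul_left (leJ_mul_right hI1 (star e)) e
    · rw [hx]; exact Or.inr (Or.inr (Or.inr (leJ_mul_left hy (e * star e))))
    · rw [hy]; exact Or.inr (Or.inr (Or.inr (leJ_mul_right hx e)))
    · rw [hy]; exact Or.inr (Or.inr (Or.inr (leJ_mul_right hx (star e))))
    · rw [hy]; exact Or.inr (Or.inr (Or.inr (leJ_mul_right hx (e * star e))))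
    · exact Or.inr (Or.inr (Or.inr (leJ_mul_right hx y)))
  · -- star closure
    intro x hx
    simp only [Set.mem_insert_iff, Set.mem_setOf_eq] at hx ⊢
    rcases hx with hx | hx | hx | hx
    · rw [hx]; exact Or.inr (Or.inl rfl)
    · rw [hx]; exact Or.inl (star_star e)
    · rw [hx]; exact Or.inr (Or.inr (Or.inl hgstar))
    · refine Or.inr (Or.inr (Or.inr ?_))
      have h1 := leJ_star' hx
      rwa [hstarh] at h1
  · -- surjectivity
    intro t
    cases t with
    | e => exact ⟨e, Set.mem_insert _ _, hφe⟩
    | f => exact ⟨star e, Set.mem_insert_of_mem _ (Set.mem_insert _ _), hφf⟩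
    | z =>
        exact ⟨star e * e,
          Set.mem_insert_of_mem _ (Set.mem_insert_of_mem _ (Set.mem_insert_of_mem _ hI1)),
          hIz _ hI1⟩
  · -- homomorphism
    intro x hx y hy
    simp only [Set.mem_insert_iff, Set.mem_setOf_eq] at hx hy
    rcases hx with hx | hx | hx | hx <;> rcases hy with hy | hy | hy | hy
    · rw [hx, hy]; rw [he, hφe]; rfl
    · rw [hx, hy]; rw [hgz, hφe, hφf]; rfl
    · rw [hx, hy]
      rw [show e * (e * star e) = e * star e from by rw [← mul_assoc, he], hgz, hφe]; rfl
    · rw [hx]; rw [hIz _ (leJ_mul_left hy e), hφe, hIz _ hy]; rfl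
    · rw [hx, hy]; rw [hIz _ hI1, hφf, hφe]; rfl
    · rw [hx, hy]; rw [hstar2, hφf]; rfl
    · rw [hx, hy]
      rw [show star e * (e * star e) = (star e * e) * star e from (mul_assoc _ _ _).symm,
        hIz _ (leJ_mul_right hI1 (star e)), hφf, hgz]; rfl
    · rw [hx]; rw [hIz _ (leJ_mul_left hy (star e)), hφf, hIz _ hy]; rfl
    · rw [hx, hy]
      rw [show (e * star e) * e = e * (star e * e) from mul_assoc _ _ _,
        hIz _ (leJ_mul_left hI1 e), hgz, hφe]; rfl
    · rw [hx, hy]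
      rw [show (e * star e) * star e = e * star e from by rw [mul_assoc, hstar2],
        hgz, hφf]; rfl
    · rw [hx, hy]
      rw [show (e * star e) * (e * star e) = e * ((star e * e) * star e) from
        by simp only [mul_assoc],
        hIz _ (leJ_mul_left (leJ_mul_right hI1 (star e)) e), hgz]; rfl
    · rw [hx]; rw [hIz _ (leJ_mul_left hy (e * star e)), hgz, hIz _ hy]; rfl
    · rw [hy]; rw [hIz _ (leJ_mul_right hx e), hIz _ hx, hφe]; rfl
    · rw [hy]; rw [hIz _ (leJ_mul_right hx (star e)), hIz _ hx, hφf]; rfl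
    · rw [hy]; rw [hIz _ (leJ_mul_right hx (e * star e)), hIz _ hx, hgz]; rfl
    · rw [hIz _ (leJ_mul_right hx y), hIz _ hx, hIz _ hy]; rfl
  · -- star homomorphism
    intro x hx
    simp only [Set.mem_insert_iff, Set.mem_setOf_eq] at hx
    rcases hx with hx | hx | hx | hx
    · rw [hx]; rw [hφf, hφe]; rfl
    · rw [hx]; rw [star_star, hφe, hφf]; rfl
    · rw [hx]; rw [hgstar, hgz]; rfl
    · have h1 := leJ_star' hx
      rw [hstarh] at h1
      rw [hIz _ h1, hIz _ hx]; rfl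

end AuxTSL

/-- For a finite involutory semigroup `S`, there is an idempotent `e` with
`¬ e ≤_J e* e` if and only if `TSL` divides `S`, i.e. `TSL` is a homomorphic
image (as involutory semigroup) of an involutory subsemigroup of `S`. -/
theorem typeA_iff_TSL_divides {S : Type*} [Semigroup S] [StarMul S] [Finite S] :
    (∃ e : S, e * e = e ∧ ¬ leJ e (star e * e)) ↔
    ∃ T : Set S,
      (∀ x ∈ T, ∀ y ∈ T, x * y ∈ T) ∧
      (∀ x ∈ T, star x ∈ T) ∧
      ∃ φ : S → TSL,
        (∀ t : TSL, ∃ x ∈ T, φ x = t) ∧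
        (∀ x ∈ T, ∀ y ∈ T, φ (x * y) = φ x * φ y) ∧
        (∀ x ∈ T, φ (star x) = star (φ x)) := by
  constructor
  · rintro ⟨e, he, hne⟩
    exact forward_div he hne
  · rintro ⟨T, hTmul, hTstar, φ, hsurj, hhom, hstarhom⟩
    by_contra hno
    push_neg at hno
    obtain ⟨x, hxT, hxe⟩ := hsurj TSL.e
    obtain ⟨n₀, hn₀⟩ := pwr_exists_idem x
    set e := pwr x n₀ with hedef
    have heT : e ∈ T := by rw [hedef]; exact pwr_mem hTmul hxT n₀
    have hφe : φ e = TSL.e := by rw [hedef]; exact pwr_phi hTmul hhom hxT hxe rfl n₀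
    have he : e * e = e := hn₀
    have hfT : star e ∈ T := hTstar e heT
    have hf : star e * star e = star e := by
      have := congrArg star he; rwa [star_mul] at this
    have hseT : star e * e ∈ T := hTmul _ hfT _ heT
    have hφf : φ (star e) = TSL.f := by rw [hstarhom e heT, hφe]; rfl
    have hφh : φ (star e * e) = TSL.z := by rw [hhom _ hfT _ heT, hφf, hφe]; rfl
    -- apply the (negated) hypothesis to e and to star e
    obtain ⟨t, ht⟩ := Lred he (hno e he)
    obtain ⟨t', ht'⟩ := Lred hf (hno (star e) hf)
    have h2' : e = e * star e * star t' := by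
      have h0 := congrArg star ht'
      simp only [star_mul, star_star] at h0
      exact h0
    have hst : star e = star e * (e * star t) := by
      have h0 := congrArg star ht
      simp only [star_mul, star_star] at h0
      rw [← mul_assoc]
      exact h0
    set m := e * (star e * e) with hmdef
    have hmT : m ∈ T := by rw [hmdef]; exact hTmul _ heT _ hseT
    have hφm : φ m = TSL.z := by
      rw [hmdef, hhom _ heT _ hseT, hφe, hφh]; rfl
    have hkey : m * star t = e * star e := by
      rw [hmdef]
      calc (e * (star e * e)) * star t = e * (star e * (e * star t)) := by
            simp only [mul_assoc]
        _ = e * star e := by rw [← hst]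
    have hme : m * e = m := by
      rw [hmdef]
      calc (e * (star e * e)) * e = e * (star e * (e * e)) := by simp only [mul_assoc]
        _ = e * (star e * e) := by rw [he]
    have hs0 : e = m * (star t * star t') := by
      rw [h2', ← hkey, mul_assoc]
    set s := star t * star t' with hsdef
    have hm2 : m = m * (m * s) := by
      conv_lhs => rw [← hme, hs0]
    have hclaim : ∀ k, m = pwr m (k+1) * pwr s k := by
      intro k
      induction k with
      | zero =>
          show m = m * m * s
          rw [mul_assoc]
          exact hm2
      | succ k ih =>
          have inner : m * pwr s k = m * (m * pwr s (k+1)) := by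
            conv_lhs => rw [hm2]
            simp only [mul_assoc]
            rw [← pwr_succ']
          calc m = pwr m (k+1) * pwr s k := ih
            _ = pwr m k * (m * pwr s k) := by
                show pwr m k * m * pwr s k = _
                rw [mul_assoc]
            _ = pwr m k * (m * (m * pwr s (k+1))) := by rw [inner]
            _ = pwr m (k+1+1) * pwr s (k+1) := by
                show _ = pwr m k * m * m * pwr s (k+1)
                simp only [mul_assoc]
    obtain ⟨n₁, hn₁⟩ := pwr_exists_idem m
    have hεw : e = pwr m n₁ * (m * (pwr s n₁ * s)) := by
      have hcl := hclaim n₁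
      calc e = m * s := hs0
        _ = (pwr m (n₁+1) * pwr s n₁) * s := by conv_lhs => rw [hcl]
        _ = pwr m n₁ * (m * (pwr s n₁ * s)) := by
            show pwr m n₁ * m * pwr s n₁ * s = _
            simp only [mul_assoc]
    have hεe : pwr m n₁ * e = e := by
      conv_lhs => rw [hεw]
      rw [show pwr m n₁ * (pwr m n₁ * (m * (pwr s n₁ * s)))
          = (pwr m n₁ * pwr m n₁) * (m * (pwr s n₁ * s)) from (mul_assoc _ _ _).symm,
        hn₁, ← hεw]
    have hfin : e = pwr m n₁ := by
      rw [← hεe]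
      exact pwr_absorb hme n₁
    have hφpw : φ (pwr m n₁) = TSL.z := pwr_phi hTmul hhom hmT hφm rfl n₁
    have : TSL.e = TSL.z := by rw [← hφe, hfin]; exact hφpw
    exact TSL.noConfusion this
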